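/- F-measure step characterization: In the classification setting, suppose L(k) ⊊ L(k+1). Then F1(k+1) < F1(k) if and only if the marginal precision at level k is smaller than half the current F-measure, i.e., (TP(k+1) − TP(k))/(|L(k+1)| − |L(k)|) < F1(k)/2. Likewise, F1(k+1) > F1(k) if and only if (TP(k+1) − TP(k))/(|L(k+1)| − |L(k)|) > F1(k)/2. -/

import Mathlib

/-- True positives after exploring the first `k` skylines. -/
noncomputable def truePos {α : Type*} [DecidableEq α] (M : Finset α) (L : ℕ → Finset α) (k : ℕ) : ℝ :=
  ((L k ∩ M).card : ℝ)

/-- F-measure after exploring the first `k` skylines: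
`F1(k) = 2·TP(k) / (|L(k)| + |M|)`. -/
noncomputable def fMeasure {α : Type*} [DecidableEq α] (M : Finset α) (L : ℕ → Finset α) (k : ℕ) : ℝ :=
  2 * truePos M L k / (((L k).card : ℝ) + (M.card : ℝ))

/-- Marginal precision at level `k`:
`q(k) = (TP(k+1) − TP(k)) / (|L(k+1)| − |L(k)|)`. -/
noncomputable def margPrec {α : Type*} [DecidableEq α] (M : Finset α) (L : ℕ → Finset α) (k : ℕ) : ℝ :=
  (truePos M L (k + 1) - truePos M L k) / (((L (k + 1)).card : ℝ) - ((L k).card : ℝ))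

/-!
`F1(k+1)` is the mediant of `F1(k) = 2 TP(k) / (|L(k)| + |M|)` and
`2 q(k) = 2 (TP(k+1) - TP(k)) / (|L(k+1)| - |L(k)|)`, and a mediant lies strictly on the
same side of the first fraction as the second one.
-/

section Mediant

variable {K : Type*} [Field K] [LinearOrder K] [IsStrictOrderedRing K] {a b c d : K}

theorem add_div_add_lt_div_iff (hb : 0 < b) (hd : 0 < d) :
    (a + c) / (b + d) < a / b ↔ c / d < a / b := by
  rw [div_lt_div_iff₀ (add_pos hb hd) hb, div_lt_div_iff₀ hd hb, mul_add, add_mul,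
    add_lt_add_iff_left, mul_comm c]

theorem div_lt_add_div_add_iff (hb : 0 < b) (hd : 0 < d) :
    a / b < (a + c) / (b + d) ↔ a / b < c / d := by
  rw [div_lt_div_iff₀ hb (add_pos hb hd), div_lt_div_iff₀ hb hd, mul_add, add_mul,
    add_lt_add_iff_left, mul_comm c]

end Mediant

section FMeasure

variable {α : Type*} [DecidableEq α] (M : Finset α) (L : ℕ → Finset α) (k : ℕ)

theorem fMeasure_succ_eq_mediant :
    fMeasure M L (k + 1) =
      (2 * truePos M L k + 2 * (truePos M L (k + 1) - truePos M L k)) /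
        ((((L k).card : ℝ) + M.card) + (((L (k + 1)).card : ℝ) - (L k).card)) := by
  unfold fMeasure
  congr 1 <;> ring

theorem two_mul_margPrec :
    2 * margPrec M L k =
      2 * (truePos M L (k + 1) - truePos M L k) / (((L (k + 1)).card : ℝ) - (L k).card) :=
  (mul_div_assoc ..).symm

end FMeasure

theorem fMeasure_step_characterization_general {α : Type*} [DecidableEq α]
    (M : Finset α) (hM : M.Nonempty)
    (L : ℕ → Finset α)
    (k : ℕ) (hssub : L k ⊂ L (k + 1)) :
    (fMeasure M L (k + 1) < fMeasure M L k ↔ margPrec M L k < fMeasure M L k / 2) ∧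
    (fMeasure M L k < fMeasure M L (k + 1) ↔ fMeasure M L k / 2 < margPrec M L k) := by
  have hsize : (0 : ℝ) < (L k).card + M.card := by
    have : 0 < M.card := hM.card_pos
    positivity
  have hgrowth : (0 : ℝ) < ((L (k + 1)).card : ℝ) - (L k).card :=
    sub_pos.mpr (by exact_mod_cast Finset.card_lt_card hssub)
  rw [lt_div_iff₀' two_pos, div_lt_iff₀' two_pos, two_mul_margPrec, fMeasure_succ_eq_mediant]
  exact ⟨add_div_add_lt_div_iff hsize hgrowth, div_lt_add_div_add_iff hsize hgrowth⟩

/-- F-measure step characterization: if `L k ⊊ L (k+1)`, then `F1(k+1) < F1(k)` iff the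
marginal precision at level `k` is smaller than `F1(k)/2`, and `F1(k+1) > F1(k)` iff it is
larger than `F1(k)/2`. -/
theorem fMeasure_step_characterization {α : Type*} [DecidableEq α]
    (P M : Finset α) (hMP : M ⊆ P) (hM : M.Nonempty)
    (L : ℕ → Finset α) (hLP : ∀ k, L k ⊆ P) (hmono : ∀ k, L k ⊆ L (k + 1))
    (k : ℕ) (hssub : L k ⊂ L (k + 1)) :
    (fMeasure M L (k + 1) < fMeasure M L k ↔ margPrec M L k < fMeasure M L k / 2) ∧
    (fMeasure M L k < fMeasure M L (k + 1) ↔ fMeasure M L k / 2 < margPrec M L k) :=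
  fMeasure_step_characterization_general M hM L k hssub
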